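/- Let x₀, ρ, r > 0 and let D = [x₀ − 2ρ, x₀ + 2ρ] × {y ∈ ℝ² : ‖y‖ ≥ r} ⊂ ℝ×ℝ². Let J be the set of all t ∈ ℝ such that 2·c_b·e^{−λ|t|}·(1 + (x₀ + 2ρ)/r) < min(a₂₂, a₃₃). Define V : ℝ×ℝ² → ℝ by V(x,y) = ‖y‖². Then V is a Lyapunov function for the linear system on J×D: for every solution z of z'(t) = (A + B(t))z(t), and every t ∈ J with z(t) ∈ D, the derivative of the function s ↦ V(z(s)) at s = t is strictly negative. -/

import Mathlib

open Filter

/-- The constant matrix `A = diag(0, -a₂₂, -a₃₃)`. -/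
noncomputable def Amat (a22 a33 : ℝ) : Matrix (Fin 3) (Fin 3) ℝ :=
  Matrix.diagonal ![0, -a22, -a33]

/-!
Along a solution, `d/dt (y₁² + y₂²) = 2 y · y'` splits into the diagonal part
`-2 (a₂₂ y₁² + a₃₃ y₂²) ≤ -2 min(a₂₂, a₃₃) ‖y‖²` and a perturbation bounded by
`2 β (|y₁| + |y₂|)(|x| + |y₁| + |y₂|)`, where `β = c_b e^{-λ|t|}` bounds the entries of `B(t)`.
On `D` we have `|x| ≤ x₀ + 2ρ` and `‖y‖ ≥ r`, so the perturbation is at most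
`2 · 2β (1 + (x₀ + 2ρ)/r) ‖y‖²`, which the hypothesis on `t` makes smaller than the diagonal part.
-/

open Matrix

theorem abs_dotProduct_mulVec_le {m n : Type*} [Fintype m] [Fintype n] {M : Matrix m n ℝ}
    {β : ℝ} (hM : ∀ i j, |M i j| ≤ β) (v : m → ℝ) (w : n → ℝ) :
    |v ⬝ᵥ M *ᵥ w| ≤ β * ((∑ i, |v i|) * ∑ j, |w j|) := by
  calc |v ⬝ᵥ M *ᵥ w| = |∑ i, ∑ j, v i * M i j * w j| := by
        simp only [dotProduct, mulVec, Finset.mul_sum, mul_assoc]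
    _ ≤ ∑ i, ∑ j, |v i * M i j * w j| :=
        (Finset.abs_sum_le_sum_abs _ _).trans
          (Finset.sum_le_sum fun i _ => Finset.abs_sum_le_sum_abs _ _)
    _ ≤ ∑ i, ∑ j, β * (|v i| * |w j|) := by
        gcongr with i _ j _
        rw [abs_mul, abs_mul, mul_comm |v i|, mul_assoc]
        exact mul_le_mul_of_nonneg_right (hM i j) (by positivity)
    _ = β * ((∑ i, |v i|) * ∑ j, |w j|) := by
        rw [Finset.sum_mul_sum, Finset.mul_sum]
        simp only [Finset.mul_sum]

theorem hasDerivAt_sq_add_sq {ι : Type*} [Fintype ι] {z : ℝ → ι → ℝ} {z' : ι → ℝ} {t : ℝ}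
    (hz : HasDerivAt z z' t) (i j : ι) :
    HasDerivAt (fun s => z s i ^ 2 + z s j ^ 2) (2 * (z t i * z' i + z t j * z' j)) t := by
  have hi := (hasDerivAt_pi.mp hz i).fun_pow 2
  have hj := (hasDerivAt_pi.mp hz j).fun_pow 2
  exact (hi.fun_add hj).congr_deriv (by ring)

theorem dotProduct_Amat_mulVec (a22 a33 : ℝ) (z : Fin 3 → ℝ) :
    ![0, z 1, z 2] ⬝ᵥ Amat a22 a33 *ᵥ z = -(a22 * z 1 ^ 2 + a33 * z 2 ^ 2) := by
  simp only [Amat, mulVec_diagonal, dotProduct, Fin.sum_univ_three, cons_val_zero, cons_val_one,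
    cons_val]
  ring

/-- With `p = |y₁| + |y₂|` and `S = y₁² + y₂² ≥ r²`: `p² ≤ 2S` and `r p ≤ (r² + p²)/2 ≤ 2S`. -/
theorem perturbation_lt_of_le_sq_add_sq {β X r m y₁ y₂ : ℝ} (hβ : 0 ≤ β) (hX : 0 ≤ X)
    (hr : 0 < r) (hS : r ^ 2 ≤ y₁ ^ 2 + y₂ ^ 2) (hm : 2 * β * (1 + X / r) < m) :
    β * ((|y₁| + |y₂|) * (X + (|y₁| + |y₂|))) < m * (y₁ ^ 2 + y₂ ^ 2) := by
  set p := |y₁| + |y₂|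
  set S := y₁ ^ 2 + y₂ ^ 2
  have hSpos : 0 < S := (pow_pos hr 2).trans_le hS
  have hp_sq : p ^ 2 ≤ 2 * S := add_sq_le.trans_eq (by simp only [sq_abs, S])
  have hp : p ≤ 2 * S / r := (le_div_iff₀ hr).mpr (by nlinarith [sq_nonneg (p - r)])
  calc β * (p * (X + p)) = β * (X * p + p ^ 2) := by ring
    _ ≤ β * (X * (2 * S / r) + 2 * S) := by gcongr
    _ = 2 * β * (1 + X / r) * S := by field_simp; ring
    _ < m * S := by gcongr

theorem lyapunov_strip_general (a22 a33 cb lam x0 ρ r : ℝ)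
    (hx0 : 0 < x0) (hr : 0 < r)
    (B : ℝ → Matrix (Fin 3) (Fin 3) ℝ)
    (hBbound : ∀ t : ℝ, ∀ i j : Fin 3, |B t i j| ≤ cb * Real.exp (-lam * |t|))
    (z : ℝ → Fin 3 → ℝ)
    (hz : ∀ t : ℝ, HasDerivAt z ((Amat a22 a33 + B t).mulVec (z t)) t)
    (t : ℝ)
    (ht : 2 * cb * Real.exp (-lam * |t|) * (1 + (x0 + 2 * ρ) / r) < min a22 a33)
    (hzD : z t 0 ∈ Set.Icc (x0 - 2 * ρ) (x0 + 2 * ρ) ∧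
           r ≤ Real.sqrt ((z t 1) ^ 2 + (z t 2) ^ 2)) :
    deriv (fun s => (z s 1) ^ 2 + (z s 2) ^ 2) t < 0 := by
  obtain ⟨⟨hx_lo, hx_hi⟩, hy⟩ := hzD
  set β := cb * Real.exp (-lam * |t|)
  have hβ : 0 ≤ β := (abs_nonneg _).trans (hBbound t 0 0)
  have hx : |z t 0| ≤ x0 + 2 * ρ := abs_le.mpr ⟨by linarith, hx_hi⟩
  have hS : r ^ 2 ≤ z t 1 ^ 2 + z t 2 ^ 2 := (Real.le_sqrt' hr).mp hy
  have hpert := le_of_abs_le (abs_dotProduct_mulVec_le (hBbound t) ![0, z t 1, z t 2] (z t))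
  simp only [Fin.sum_univ_three, cons_val, abs_zero, zero_add] at hpert
  have hlt :=
    perturbation_lt_of_le_sq_add_sq hβ ((abs_nonneg _).trans hx) hr hS (by rwa [← mul_assoc])
  have hA : min a22 a33 * (z t 1 ^ 2 + z t 2 ^ 2) ≤ a22 * z t 1 ^ 2 + a33 * z t 2 ^ 2 := by
    nlinarith [min_le_left a22 a33, min_le_right a22 a33, sq_nonneg (z t 1), sq_nonneg (z t 2)]
  have hV : z t 1 * ((Amat a22 a33 + B t) *ᵥ z t) 1 + z t 2 * ((Amat a22 a33 + B t) *ᵥ z t) 2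
      = -(a22 * z t 1 ^ 2 + a33 * z t 2 ^ 2) + ![0, z t 1, z t 2] ⬝ᵥ B t *ᵥ z t := by
    rw [← dotProduct_Amat_mulVec, ← dotProduct_add, ← add_mulVec]
    simp [dotProduct, Fin.sum_univ_three]
  have hB : ![0, z t 1, z t 2] ⬝ᵥ B t *ᵥ z t
      ≤ β * ((|z t 1| + |z t 2|) * (x0 + 2 * ρ + (|z t 1| + |z t 2|))) :=
    hpert.trans (by rw [add_assoc]; gcongr)
  rw [(hasDerivAt_sq_add_sq (hz t) 1 2).deriv, hV]
  linarith

/-- **Lemma (Lyapunov function on the strip `x ∈ [x₀-2ρ, x₀+2ρ]`, `‖y‖ ≥ r`).**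
Consider `z' = (A + B(t))z` on `ℝ × ℝ²` (coordinates `(x, y₁, y₂)`), where
`A = diag(0, -a₂₂, -a₃₃)` with `a₂₂, a₃₃ > 0` and the continuous matrix `B(t)` has entries
bounded by `c_b e^{-λ|t|}`.  Let `x₀, ρ, r > 0`,
`D = [x₀-2ρ, x₀+2ρ] × {‖y‖ ≥ r}`, and let `t` satisfy
`2 c_b e^{-λ|t|} (1 + (x₀+2ρ)/r) < min(a₂₂, a₃₃)`.  Then `V(x,y) = ‖y‖²` is strictly
decreasing along any solution at such a time `t` with `z(t) ∈ D`. -/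
theorem lyapunov_strip (a22 a33 cb lam x0 ρ r : ℝ)
    (ha22 : 0 < a22) (ha33 : 0 < a33) (hcb : 0 < cb) (hlam : 0 < lam)
    (hx0 : 0 < x0) (hρ : 0 < ρ) (hr : 0 < r)
    (B : ℝ → Matrix (Fin 3) (Fin 3) ℝ) (hBcont : Continuous B)
    (hBbound : ∀ t : ℝ, ∀ i j : Fin 3, |B t i j| ≤ cb * Real.exp (-lam * |t|))
    (z : ℝ → Fin 3 → ℝ)
    (hz : ∀ t : ℝ, HasDerivAt z ((Amat a22 a33 + B t).mulVec (z t)) t)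
    (t : ℝ)
    (ht : 2 * cb * Real.exp (-lam * |t|) * (1 + (x0 + 2 * ρ) / r) < min a22 a33)
    (hzD : z t 0 ∈ Set.Icc (x0 - 2 * ρ) (x0 + 2 * ρ) ∧
           r ≤ Real.sqrt ((z t 1) ^ 2 + (z t 2) ^ 2)) :
    deriv (fun s => (z s 1) ^ 2 + (z s 2) ^ 2) t < 0 :=
  lyapunov_strip_general a22 a33 cb lam x0 ρ r hx0 hr B hBbound z hz t ht hzD
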